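/- Let g ≥ 2 and let G be the group presented by generators a₁, b₁, …, a_g, b_g subject to the single relation [a₁,b₁]⋯[a_g,b_g] = 1, where [a,b] = a b a⁻¹ b⁻¹. Write a₁, a₂ for the images in G of the first two generators of the first family. Then for every integer k ≥ 2 and all natural numbers ℓ, j, the elements a₁ · a₂^(−ℓ) · a₁^(k−1) · a₂^ℓ and a₁ · a₂^(−j) · a₁^(k−1) · a₂^j are conjugate in G if and only if ℓ = j. -/

import Mathlib

/-!
Send `a₁ ↦ T = [[1, 1], [0, 1]]`, `a₂ ↦ S T S⁻¹ = [[1, 0], [-1, 1]]` and every other generator to `1`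
in `SL(2, ℤ)`; this kills the relator since all `bᵢ` go to `1`. The image of
`a₁ a₂^(-m) a₁^n a₂^m` has trace `2 - n m²`, and the trace is a conjugacy invariant, so for
`n = k - 1 ≠ 0` conjugacy forces `ℓ² = j²`.
-/

open scoped commutatorElement

/-- The single relator `[a₁,b₁]⋯[a_g,b_g]` of the fundamental group of the orientable
surface of genus `g`, as an element of the free group on `Fin g ⊕ Fin g`,
where `Sum.inl i` gives `aᵢ` and `Sum.inr i` gives `bᵢ`. -/
def surfaceRelator (g : ℕ) : FreeGroup (Fin g ⊕ Fin g) :=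
  (List.ofFn fun i : Fin g =>
    ⁅(FreeGroup.of (Sum.inl i) : FreeGroup (Fin g ⊕ Fin g)), FreeGroup.of (Sum.inr i)⁆).prod

open scoped MatrixGroups
open Matrix ModularGroup

theorem lift_surfaceRelator_eq_one {g : ℕ} {H : Type*} [Group H] {f : Fin g ⊕ Fin g → H}
    (hf : ∀ i, f (Sum.inr i) = 1) : FreeGroup.lift f (surfaceRelator g) = 1 := by
  simp [surfaceRelator, map_list_prod, Function.comp_def, commutatorElement_def, hf]

def surfaceGroupHomOfA {g : ℕ} {H : Type*} [Group H] (a : Fin g → H) :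
    PresentedGroup ({surfaceRelator g} : Set (FreeGroup (Fin g ⊕ Fin g))) →* H :=
  PresentedGroup.toGroup (f := Sum.elim a 1) <| by
    rintro r rfl
    exact lift_surfaceRelator_eq_one fun _ => rfl

@[simp]
theorem surfaceGroupHomOfA_of_inl {g : ℕ} {H : Type*} [Group H] (a : Fin g → H) (i : Fin g) :
    surfaceGroupHomOfA a (PresentedGroup.of (Sum.inl i)) = a i :=
  PresentedGroup.toGroup.of _

theorem Matrix.SpecialLinearGroup.trace_inv_mul_mul {n R : Type*} [Fintype n] [DecidableEq n]
    [CommRing R] (h x : SpecialLinearGroup n R) :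
    trace ((h⁻¹ * x * h : SpecialLinearGroup n R) : Matrix n n R) = trace (x : Matrix n n R) := by
  rw [coe_mul, coe_mul, trace_mul_cycle, ← coe_mul, mul_inv_cancel, coe_one, Matrix.one_mul]

theorem ModularGroup.coe_conj_T_zpow (m : ℤ) :
    (((S * T * S⁻¹) ^ m : SL(2, ℤ)) : Matrix (Fin 2) (Fin 2) ℤ) = !![1, 0; -m, 1] := by
  rw [conj_zpow, S_inv]
  simp [coe_T_zpow]

theorem ModularGroup.trace_T_mul_conj_T_zpow (m : ℤ) (n : ℕ) :
    trace ((T * (S * T * S⁻¹) ^ (-m) * T ^ n * (S * T * S⁻¹) ^ m : SL(2, ℤ)) :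
      Matrix (Fin 2) (Fin 2) ℤ) = 2 - n * m ^ 2 := by
  have hTn : ((T ^ n : SL(2, ℤ)) : Matrix (Fin 2) (Fin 2) ℤ) = !![1, (n : ℤ); 0, 1] := by
    rw [← coe_T_zpow, zpow_natCast]
  simp only [Matrix.SpecialLinearGroup.coe_mul, hTn, coe_conj_T_zpow, coe_T]
  simp [trace_fin_two]
  ring

/-- **Nonconjugacy in the surface group.**
In the fundamental group of the orientable surface of genus `g ≥ 2`, with `a₁, a₂`
the images of the first two generators of the first family, for `k ≥ 2` and `ℓ, j ∈ ℕ`,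
the elements `a₁ a₂^(−ℓ) a₁^(k−1) a₂^ℓ` and `a₁ a₂^(−j) a₁^(k−1) a₂^j` are conjugate
if and only if `ℓ = j`. -/
theorem surfaceGroup_conjugate_iff (g : ℕ) (hg : 2 ≤ g) (k : ℕ) (hk : 2 ≤ k) (ℓ j : ℕ) :
    (∃ h : PresentedGroup ({surfaceRelator g} : Set (FreeGroup (Fin g ⊕ Fin g))),
        h⁻¹ *
            (PresentedGroup.of (rels := ({surfaceRelator g} : Set (FreeGroup (Fin g ⊕ Fin g))))
                (Sum.inl (⟨0, by omega⟩ : Fin g)) *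
              PresentedGroup.of (rels := ({surfaceRelator g} : Set (FreeGroup (Fin g ⊕ Fin g))))
                (Sum.inl (⟨1, by omega⟩ : Fin g)) ^ (-(ℓ : ℤ)) *
              PresentedGroup.of (rels := ({surfaceRelator g} : Set (FreeGroup (Fin g ⊕ Fin g))))
                (Sum.inl (⟨0, by omega⟩ : Fin g)) ^ (k - 1) *
              PresentedGroup.of (rels := ({surfaceRelator g} : Set (FreeGroup (Fin g ⊕ Fin g))))
                (Sum.inl (⟨1, by omega⟩ : Fin g)) ^ (ℓ : ℤ)) * h =
          PresentedGroup.of (rels := ({surfaceRelator g} : Set (FreeGroup (Fin g ⊕ Fin g))))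
              (Sum.inl (⟨0, by omega⟩ : Fin g)) *
            PresentedGroup.of (rels := ({surfaceRelator g} : Set (FreeGroup (Fin g ⊕ Fin g))))
              (Sum.inl (⟨1, by omega⟩ : Fin g)) ^ (-(j : ℤ)) *
            PresentedGroup.of (rels := ({surfaceRelator g} : Set (FreeGroup (Fin g ⊕ Fin g))))
              (Sum.inl (⟨0, by omega⟩ : Fin g)) ^ (k - 1) *
            PresentedGroup.of (rels := ({surfaceRelator g} : Set (FreeGroup (Fin g ⊕ Fin g))))
              (Sum.inl (⟨1, by omega⟩ : Fin g)) ^ (j : ℤ)) ↔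
      ℓ = j := by
  refine ⟨fun ⟨h, hconj⟩ => ?_, fun hℓj => ⟨1, by rw [hℓj, inv_one, one_mul, mul_one]⟩⟩
  let φ := surfaceGroupHomOfA (g := g) fun i =>
    if i.val = 0 then T else if i.val = 1 then S * T * S⁻¹ else 1
  have htrace := congrArg (fun x => trace (φ x : Matrix (Fin 2) (Fin 2) ℤ)) hconj
  simp only [φ, map_mul, map_inv, map_zpow, map_pow, surfaceGroupHomOfA_of_inl, ↓reduceIte,
    one_ne_zero, Matrix.SpecialLinearGroup.trace_inv_mul_mul, trace_T_mul_conj_T_zpow] at htrace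
  have hn : ((k - 1 : ℕ) : ℤ) ≠ 0 := by omega
  have hsq : (ℓ : ℤ) ^ 2 = (j : ℤ) ^ 2 := mul_left_cancel₀ hn (sub_right_injective htrace)
  exact Nat.pow_left_injective two_ne_zero (by exact_mod_cast hsq)
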